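/- arXiv:1701.06762 — 5 statements merged into one kernel-verified Lean document; each statement's English description precedes it below -/
import Mathlib

section
/- Let F be a field and f : ℤ × ℤ → F any function. For (s,t) ∈ ℤ² and n ≥ 0 define τ^{(s,t)}_n = det_{0 ≤ i,j < n}(f_{s+i,t+j}), the determinant of the n × n matrix whose (i,j) entry is f_{s+i,t+j} (so τ^{(s,t)}_0 = 1). Then for all (s,t) ∈ ℤ² and all n ≥ 1, the bilinear form of the discrete 2D Toda molecule holds: τ^{(s+1,t+1)}_{n−1} · τ^{(s,t)}_{n+1} − τ^{(s+1,t+1)}_n · τ^{(s,t)}_n + τ^{(s+1,t)}_n · τ^{(s,t+1)}_n = 0. -/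
/-- `tau f s t n` is the `n × n` determinant `det_{0 ≤ i,j < n} (f (s+i, t+j))`. -/
noncomputable def tau {F : Type*} [Field F] (f : ℤ × ℤ → F) (s t : ℤ) (n : ℕ) : F :=
  Matrix.det (Matrix.of fun i j : Fin n => f (s + (i : ℕ), t + (j : ℕ)))

/-- `f` gives the solution `(a, b)` through the dependent variable transformation:
all determinants `τ` are nonzero, `a^{(s,t)}_n = τ^{(s+1,t)}_{n+1} τ^{(s,t)}_n /
(τ^{(s+1,t)}_n τ^{(s,t)}_{n+1})` for `n ≥ 0`, and `b^{(s,t)}_n =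
τ^{(s,t+1)}_{n-1} τ^{(s,t)}_{n+1} / (τ^{(s,t+1)}_n τ^{(s,t)}_n)` for `n ≥ 1`. -/
def GivesSol {F : Type*} [Field F] (f : ℤ × ℤ → F) (a b : ℤ → ℤ → ℕ → F) : Prop :=
  (∀ (s t : ℤ) (n : ℕ), tau f s t n ≠ 0) ∧
  (∀ (s t : ℤ) (n : ℕ),
    a s t n = tau f (s + 1) t (n + 1) * tau f s t n / (tau f (s + 1) t n * tau f s t (n + 1))) ∧
  (∀ (s t : ℤ) (n : ℕ),
    b s t (n + 1) =
      tau f s (t + 1) n * tau f s t (n + 2) / (tau f s (t + 1) (n + 1) * tau f s t (n + 1)))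

/-!
The bilinear equation is the Desnanot–Jacobi identity for the `(n+1) × (n+1)` matrix
`(f (s+i, t+j))`: its determinant is `τ^{(s,t)}_{n+1}`, its central minor is `τ^{(s+1,t+1)}_{n-1}`,
and the four minors obtained by deleting one extreme row and one extreme column are
`τ^{(s,t)}_n`, `τ^{(s+1,t+1)}_n`, `τ^{(s,t+1)}_n` and `τ^{(s+1,t)}_n`.

Desnanot–Jacobi is Sylvester's identity with a `2 × 2` border. When the central block `A` is
invertible, every bordered minor is `det A` times an entry of the Schur complement
`D - C A⁻¹ B`, and `det G = det A * det (D - C A⁻¹ B)`. The general case follows by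
specializing the generic matrix over `ℤ[x_ij]`, whose central minor is a nonzero polynomial and
hence invertible in the fraction field.
-/

open Matrix

namespace Matrix

variable {m R : Type*} [Fintype m] [DecidableEq m] [CommRing R]

def borderMinor (G : Matrix (m ⊕ Fin 2) (m ⊕ Fin 2) R) (a b : Fin 2) :
    Matrix (m ⊕ Fin 1) (m ⊕ Fin 1) R :=
  G.submatrix (Sum.map id fun _ => a) (Sum.map id fun _ => b)

def borderMinorMatrix (G : Matrix (m ⊕ Fin 2) (m ⊕ Fin 2) R) : Matrix (Fin 2) (Fin 2) R :=
  of fun a b => det (borderMinor G a b)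

omit [Fintype m] [DecidableEq m] [CommRing R] in
theorem toBlocks₁₁_map {n S : Type*} (G : Matrix (m ⊕ n) (m ⊕ n) R) (φ : R → S) :
    (G.map φ).toBlocks₁₁ = G.toBlocks₁₁.map φ := rfl

theorem borderMinorMatrix_map {S : Type*} [CommRing S] (G : Matrix (m ⊕ Fin 2) (m ⊕ Fin 2) R)
    (φ : R →+* S) : borderMinorMatrix (G.map φ) = (borderMinorMatrix G).map φ := by
  ext a b
  simp [borderMinorMatrix, borderMinor, RingHom.map_det, submatrix_map]

theorem det_borderMinor_fromBlocks (A : Matrix m m R) [Invertible A] (B : Matrix m (Fin 2) R)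
    (C : Matrix (Fin 2) m R) (D : Matrix (Fin 2) (Fin 2) R) (a b : Fin 2) :
    det (borderMinor (fromBlocks A B C D) a b) = det A * (D - C * ⅟A * B) a b := by
  have hblocks : borderMinor (fromBlocks A B C D) a b =
      fromBlocks A (B.submatrix id fun _ => b) (C.submatrix (fun _ : Fin 1 => a) id)
        (D.submatrix (fun _ => a) fun _ => b) := by
    ext (i | i) (j | j) <;> rfl
  rw [hblocks, det_fromBlocks₁₁, det_unique (n := Fin 1)]
  simp [Matrix.mul_apply]

theorem det_borderMinorMatrix_of_isUnit (G : Matrix (m ⊕ Fin 2) (m ⊕ Fin 2) R)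
    (h : IsUnit G.toBlocks₁₁.det) :
    det (borderMinorMatrix G) = det G * det G.toBlocks₁₁ := by
  have : Invertible G.toBlocks₁₁ := G.toBlocks₁₁.invertibleOfIsUnitDet h
  rw [← fromBlocks_toBlocks G]
  simp only [borderMinorMatrix, det_borderMinor_fromBlocks, det_fromBlocks₁₁, det_fin_two,
    toBlocks_fromBlocks₁₁, of_apply]
  ring

theorem det_toBlocks₁₁_mvPolynomialX_ne_zero (n : Type*) :
    det (mvPolynomialX (m ⊕ n) (m ⊕ n) ℤ).toBlocks₁₁ ≠ 0 := by
  have hrename : (mvPolynomialX (m ⊕ n) (m ⊕ n) ℤ).toBlocks₁₁ =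
      (MvPolynomial.rename (R := ℤ) (Prod.map Sum.inl Sum.inl)).toRingHom.mapMatrix
        (mvPolynomialX m m ℤ) := by
    ext i j
    simp [toBlocks₁₁]
  rw [hrename, ← RingHom.map_det]
  exact (map_ne_zero_iff _ (MvPolynomial.rename_injective _
    (Sum.inl_injective.prodMap Sum.inl_injective))).mpr (det_mvPolynomialX_ne_zero m ℤ)

theorem det_borderMinorMatrix (G : Matrix (m ⊕ Fin 2) (m ⊕ Fin 2) R) :
    det (borderMinorMatrix G) = det G * det G.toBlocks₁₁ := by
  let X := mvPolynomialX (m ⊕ Fin 2) (m ⊕ Fin 2) ℤ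
  let φ := algebraMap (MvPolynomial ((m ⊕ Fin 2) × (m ⊕ Fin 2)) ℤ)
    (FractionRing (MvPolynomial ((m ⊕ Fin 2) × (m ⊕ Fin 2)) ℤ))
  have hφ : Function.Injective φ := IsFractionRing.injective _ _
  have hX : det (borderMinorMatrix X) = det X * det X.toBlocks₁₁ := by
    apply hφ
    have hunit : IsUnit (X.map φ).toBlocks₁₁.det := by
      rw [toBlocks₁₁_map, ← RingHom.mapMatrix_apply, ← RingHom.map_det]
      exact ((map_ne_zero_iff _ hφ).mpr (det_toBlocks₁₁_mvPolynomialX_ne_zero _)).isUnit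
    simpa only [map_mul, RingHom.map_det, RingHom.mapMatrix_apply, ← borderMinorMatrix_map,
      ← toBlocks₁₁_map] using det_borderMinorMatrix_of_isUnit _ hunit
  have hG := congrArg (MvPolynomial.eval₂Hom (Int.castRingHom R) fun p => G p.1 p.2) hX
  simp only [map_mul, RingHom.map_det, RingHom.mapMatrix_apply, ← borderMinorMatrix_map,
    ← toBlocks₁₁_map] at hG
  rwa [MvPolynomial.coe_eval₂Hom, mvPolynomialX_map_eval₂] at hG

theorem desnanot_jacobi (k : ℕ) (A : Matrix (Fin (k + 2)) (Fin (k + 2)) R) :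
    det A * det (A.submatrix (fun i : Fin k => i.succ.castSucc) fun j => j.succ.castSucc) =
      det (A.submatrix Fin.castSucc Fin.castSucc) * det (A.submatrix Fin.succ Fin.succ) -
        det (A.submatrix Fin.castSucc Fin.succ) * det (A.submatrix Fin.succ Fin.castSucc) := by
  -- `E` lists the central indices `1, …, k` first, then `k + 1` (border `0`) and `0` (border `1`).
  let E : Fin k ⊕ Fin 2 ≃ Fin (k + 2) := finSumFinEquiv.trans (finRotate (k + 2))
  let e : Fin k ⊕ Fin 1 ≃ Fin (k + 1) := finSumFinEquiv
  let σ := finRotate (k + 1)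
  let r : Fin 2 → Fin k ⊕ Fin 1 → Fin (k + 2) := fun a => E ∘ Sum.map id fun _ => a
  have hr0 : r 0 = Fin.succ ∘ e := by
    ext (i | i) : 1 <;> simp [r, E, e, Fin.ext_iff, Fin.val_add]
  have hr1 : r 1 = Fin.castSucc ∘ e.trans σ := by
    ext (i | i) : 1 <;>
      simp (disch := omega) [r, E, e, σ, Fin.ext_iff, Fin.val_add, Nat.mod_eq_of_lt]
  have hcentral : (A.submatrix E E).toBlocks₁₁ =
      A.submatrix (fun i : Fin k => i.succ.castSucc) fun j => j.succ.castSucc := by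
    ext i j
    simp only [toBlocks₁₁, E, of_apply, submatrix_apply]
    congr 1 <;> ext <;> simp [Fin.val_add]
  have hborder : ∀ a b, borderMinor (A.submatrix E E) a b = A.submatrix (r a) (r b) :=
    fun _ _ => rfl
  have h00 : det (A.submatrix (r 0) (r 0)) = det (A.submatrix Fin.succ Fin.succ) := by
    rw [hr0]; exact det_submatrix_equiv_self e (A.submatrix _ _)
  have h11 : det (A.submatrix (r 1) (r 1)) = det (A.submatrix Fin.castSucc Fin.castSucc) := by
    rw [hr1]; exact det_submatrix_equiv_self (e.trans σ) (A.submatrix _ _)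
  have h01 : det (A.submatrix (r 0) (r 1)) =
      Equiv.Perm.sign σ * det (A.submatrix Fin.succ Fin.castSucc) := by
    rw [hr0, hr1]
    exact (det_submatrix_equiv_self e ((A.submatrix _ _).submatrix id σ)).trans (det_permute' _ _)
  have h10 : det (A.submatrix (r 1) (r 0)) =
      Equiv.Perm.sign σ * det (A.submatrix Fin.castSucc Fin.succ) := by
    rw [hr0, hr1]
    exact (det_submatrix_equiv_self e ((A.submatrix _ _).submatrix σ id)).trans (det_permute _ _)
  have hsign : ((Equiv.Perm.sign σ : ℤ) : R) * (Equiv.Perm.sign σ : ℤ) = 1 := by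
    rw [← Int.cast_mul, ← Units.val_mul, Int.units_mul_self, Units.val_one, Int.cast_one]
  have hsylvester := det_borderMinorMatrix (A.submatrix E E)
  rw [det_fin_two, det_submatrix_equiv_self, hcentral] at hsylvester
  simp only [borderMinorMatrix, of_apply, hborder, h00, h11, h01, h10] at hsylvester
  linear_combination -hsylvester -
    det (A.submatrix Fin.castSucc Fin.succ) * det (A.submatrix Fin.succ Fin.castSucc) * hsign

end Matrix

def tauMatrix {α : Type*} (f : ℤ × ℤ → α) (s t : ℤ) (n : ℕ) : Matrix (Fin n) (Fin n) α :=
  of fun i j => f (s + (i : ℕ), t + (j : ℕ))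

theorem tau_eq_det_tauMatrix {F : Type*} [Field F] (f : ℤ × ℤ → F) (s t : ℤ) (n : ℕ) :
    tau f s t n = det (tauMatrix f s t n) := rfl

theorem submatrix_tauMatrix {α : Type*} (f : ℤ × ℤ → α) {s t s' t' : ℤ} {n N : ℕ}
    {u v : Fin n → Fin N} (hu : ∀ i, s + (u i : ℕ) = s' + (i : ℕ))
    (hv : ∀ j, t + (v j : ℕ) = t' + (j : ℕ)) :
    (tauMatrix f s t N).submatrix u v = tauMatrix f s' t' n := by
  ext i j
  simp [tauMatrix, hu, hv]

/-- The determinants `τ^{(s,t)}_n` of an arbitrary function `f : ℤ² → F`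
satisfy the bilinear form of the discrete 2D Toda molecule. -/
theorem bilinear_toda {F : Type*} [Field F] (f : ℤ × ℤ → F) (s t : ℤ) (n : ℕ) (hn : 1 ≤ n) :
    tau f (s + 1) (t + 1) (n - 1) * tau f s t (n + 1)
      - tau f (s + 1) (t + 1) n * tau f s t n
      + tau f (s + 1) t n * tau f s (t + 1) n = 0 := by
  obtain ⟨k, rfl⟩ : ∃ k, n = k + 1 := ⟨n - 1, by omega⟩
  have hcastSucc (x : ℤ) (i : Fin (k + 1)) : x + (i.castSucc : ℕ) = x + (i : ℕ) := rfl
  have hsucc (x : ℤ) (i : Fin (k + 1)) : x + (i.succ : ℕ) = x + 1 + (i : ℕ) := by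
    rw [Fin.val_succ]; push_cast; ring
  have hcentral (x : ℤ) (i : Fin k) : x + (i.succ.castSucc : ℕ) = x + 1 + (i : ℕ) := by
    rw [Fin.val_castSucc, Fin.val_succ]; push_cast; ring
  have hdj := desnanot_jacobi k (tauMatrix f s t (k + 1 + 1))
  rw [submatrix_tauMatrix f (hcentral s) (hcentral t),
    submatrix_tauMatrix f (hcastSucc s) (hcastSucc t), submatrix_tauMatrix f (hsucc s) (hsucc t),
    submatrix_tauMatrix f (hcastSucc s) (hsucc t), submatrix_tauMatrix f (hsucc s) (hcastSucc t)]
    at hdj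
  simp only [Nat.add_sub_cancel, tau_eq_det_tauMatrix]
  linear_combination hdj
end

section
/- Let F be a field and f : ℤ × ℤ → F a function such that τ^{(s,t)}_n = det_{0 ≤ i,j < n}(f_{s+i,t+j}) is nonzero for all (s,t) ∈ ℤ² and all n ≥ 0. Define a^{(s,t)}_n = (τ^{(s+1,t)}_{n+1} τ^{(s,t)}_n)/(τ^{(s+1,t)}_n τ^{(s,t)}_{n+1}) for n ≥ 0, b^{(s,t)}_n = (τ^{(s,t+1)}_{n−1} τ^{(s,t)}_{n+1})/(τ^{(s,t+1)}_n τ^{(s,t)}_n) for n ≥ 1, and b^{(s,t)}_0 = 0. Then (a,b) is a solution to the discrete 2D Toda molecule: for all (s,t) ∈ ℤ² and n ∈ ℤ_{≥0}, a^{(s,t+1)}_n + b^{(s+1,t)}_n = a^{(s,t)}_n + b^{(s,t)}_{n+1} and a^{(s,t+1)}_n · b^{(s+1,t)}_{n+1} = a^{(s,t)}_{n+1} · b^{(s,t)}_{n+1}. -/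
/-- A solution to the discrete 2D Toda molecule. -/
def IsTodaSolution {F : Type*} [Field F] (a b : ℤ → ℤ → ℕ → F) : Prop :=
  (∀ (s t : ℤ) (n : ℕ), a s (t + 1) n + b (s + 1) t n = a s t n + b s t (n + 1)) ∧
  (∀ (s t : ℤ) (n : ℕ), a s (t + 1) n * b (s + 1) t (n + 1) = a s t (n + 1) * b s t (n + 1)) ∧
  (∀ s t : ℤ, b s t 0 = 0)

/-- The solution is non-vanishing: `a` nonzero for all `n ≥ 0`, `b` nonzero for all `n ≥ 1`. -/
def NonVanishing {F : Type*} [Field F] (a b : ℤ → ℤ → ℕ → F) : Prop :=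
  (∀ (s t : ℤ) (n : ℕ), a s t n ≠ 0) ∧ (∀ (s t : ℤ) (n : ℕ), b s t (n + 1) ≠ 0)

section AuxToda
open Matrix
variable {F : Type*} [Field F]

lemma schur_one {m : ℕ} (A : Matrix (Fin m) (Fin m) F) [Invertible A]
    (B : Matrix (Fin m) (Fin 2) F) (C : Matrix (Fin 2) (Fin m) F) (D : Matrix (Fin 2) (Fin 2) F)
    (r0 c0 : Fin 2) :
    det (fromBlocks A (B.submatrix id fun _ : Fin 1 => c0)
      (C.submatrix (fun _ : Fin 1 => r0) id) (D.submatrix (fun _ : Fin 1 => r0) fun _ => c0))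
      = A.det * (D - C * ⅟A * B) r0 c0 := by
  rw [det_fromBlocks₁₁, det_fin_one]
  simp [Matrix.mul_apply, Matrix.sub_apply, Finset.sum_mul, Finset.mul_sum]

lemma jacobi (f : ℤ × ℤ → F) (s t : ℤ) (m : ℕ) (hA : tau f (s+1) (t+1) m ≠ 0) :
    tau f s t (m+2) * tau f (s+1) (t+1) m =
      tau f (s+1) (t+1) (m+1) * tau f s t (m+1)
        - tau f (s+1) t (m+1) * tau f s (t+1) (m+1) := by
  classical
  set A : Matrix (Fin m) (Fin m) F := Matrix.of fun i j : Fin m => f (s+1+(i:ℕ), t+1+(j:ℕ)) with hAdef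
  have hAtau : tau f (s+1) (t+1) m = A.det := rfl
  haveI : Invertible A := A.invertibleOfIsUnitDet (by rw [← hAtau]; exact hA.isUnit)
  set e : Fin 2 → ℤ := ![0, (m:ℤ)+1] with he
  have he0 : e 0 = 0 := rfl
  have he1 : e 1 = (m:ℤ)+1 := rfl
  set B : Matrix (Fin m) (Fin 2) F := Matrix.of fun i c => f (s+1+(i:ℕ), t + e c) with hB
  set C : Matrix (Fin 2) (Fin m) F := Matrix.of fun r j => f (s + e r, t+1+(j:ℕ)) with hC
  set D : Matrix (Fin 2) (Fin 2) F := Matrix.of fun r c => f (s + e r, t + e c) with hD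
  set S : Matrix (Fin 2) (Fin 2) F := D - C * ⅟A * B with hS
  -- the equivalences
  set σ : Fin m ⊕ Fin 1 ≃ Fin (m+1) := finSumFinEquiv with hσ
  set σ' : Fin m ⊕ Fin 1 ≃ Fin (m+1) :=
    (Equiv.sumComm _ _).trans (finSumFinEquiv.trans (finCongr (by omega))) with hσ'
  set ρ : Fin m ⊕ Fin 2 ≃ Fin (m+2) :=
    (Equiv.sumCongr (Equiv.refl (Fin m)) ((finCongr (by norm_num)).trans
        (finSumFinEquiv (m := 1) (n := 1)).symm)).trans
      ((Equiv.sumAssoc _ _ _).symm.trans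
        ((Equiv.sumCongr (Equiv.sumComm _ _) (Equiv.refl (Fin 1))).trans
          ((Equiv.sumCongr finSumFinEquiv (Equiv.refl (Fin 1))).trans
            (finSumFinEquiv.trans (finCongr (by omega)))))) with hρ
  have hσl : ∀ i : Fin m, ((σ (Sum.inl i) : Fin (m+1)) : ℕ) = i := by intro i; simp [hσ]
  have hσr : ∀ r : Fin 1, ((σ (Sum.inr r) : Fin (m+1)) : ℕ) = m := by
    intro r; obtain rfl : r = 0 := Subsingleton.elim r 0; simp [hσ]
  have hσ'l : ∀ i : Fin m, ((σ' (Sum.inl i) : Fin (m+1)) : ℕ) = i + 1 := by intro i; simp [hσ']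
  have hσ'r : ∀ r : Fin 1, ((σ' (Sum.inr r) : Fin (m+1)) : ℕ) = 0 := by
    intro r; obtain rfl : r = 0 := Subsingleton.elim r 0; simp [hσ']
  have hρl : ∀ i : Fin m, ((ρ (Sum.inl i) : Fin (m+2)) : ℕ) = 1 + i := by intro i; simp [hρ]
  have hρe : ∀ c : Fin 2, (((ρ (Sum.inr c) : Fin (m+2)) : ℕ) : ℤ) = e c := by
    intro c
    fin_cases c <;> simp [hρ, he, finSumFinEquiv, Fin.addCases]
  have hrot : ∀ x : Fin m ⊕ Fin 1, σ' x = finRotate (m+1) (σ x) := by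
    rintro (i | r)
    · apply Fin.ext
      rw [hσ'l, finRotate_succ_apply, Fin.val_add_one_of_lt]
      · rw [hσl]
      · rw [Fin.lt_def, Fin.val_last, hσl]; exact i.isLt
    · obtain rfl : r = 0 := Subsingleton.elim r 0
      have hlast : σ (Sum.inr 0) = Fin.last m := Fin.ext (by rw [hσr]; rfl)
      rw [hlast, finRotate_last]
      exact Fin.ext (by rw [hσ'r]; rfl)
  have entry : ∀ (x x' y y' : ℤ), x = x' → y = y' → f (x, y) = f (x', y') := by
    rintro x _ y _ rfl rfl; rfl
  -- full matrix
  have hfull : tau f s t (m+2) = A.det * S.det := by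
    have hsub : (Matrix.of fun i j : Fin (m+2) => f (s + (i:ℕ), t + (j:ℕ))).submatrix ρ ρ
        = fromBlocks A B C D := by
      ext x y
      rcases x with i | r <;> rcases y with j | c <;>
        simp only [Matrix.submatrix_apply, Matrix.of_apply, Matrix.fromBlocks_apply₁₁,
          Matrix.fromBlocks_apply₁₂, Matrix.fromBlocks_apply₂₁, Matrix.fromBlocks_apply₂₂,
          hAdef, hB, hC, hD]
      · exact entry _ _ _ _ (by rw [hρl]; push_cast; ring) (by rw [hρl]; push_cast; ring)
      · exact entry _ _ _ _ (by rw [hρl]; push_cast; ring) (by rw [hρe])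
      · exact entry _ _ _ _ (by rw [hρe]) (by rw [hρl]; push_cast; ring)
      · exact entry _ _ _ _ (by rw [hρe]) (by rw [hρe])
    calc tau f s t (m+2)
        = det ((Matrix.of fun i j : Fin (m+2) => f (s + (i:ℕ), t + (j:ℕ))).submatrix ρ ρ) :=
          (det_submatrix_equiv_self ρ _).symm
      _ = det (fromBlocks A B C D) := by rw [hsub]
      _ = A.det * S.det := by rw [det_fromBlocks₁₁, hS]
  -- (1,1) minor
  have hv : tau f (s+1) (t+1) (m+1) = A.det * S 1 1 := by
    have hsub : (Matrix.of fun i j : Fin (m+1) => f (s+1 + (i:ℕ), t+1 + (j:ℕ))).submatrix σ σ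
        = fromBlocks A (B.submatrix id fun _ : Fin 1 => 1)
            (C.submatrix (fun _ : Fin 1 => 1) id)
            (D.submatrix (fun _ : Fin 1 => 1) fun _ => 1) := by
      ext x y
      rcases x with i | r <;> rcases y with j | c <;>
        simp only [Matrix.submatrix_apply, Matrix.of_apply, Matrix.fromBlocks_apply₁₁,
          Matrix.fromBlocks_apply₁₂, Matrix.fromBlocks_apply₂₁, Matrix.fromBlocks_apply₂₂,
          hAdef, hB, hC, hD, id_eq]
      · exact entry _ _ _ _ (by rw [hσl]) (by rw [hσl])
      · exact entry _ _ _ _ (by rw [hσl]) (by rw [hσr, he1]; push_cast; ring)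
      · exact entry _ _ _ _ (by rw [hσr, he1]; push_cast; ring) (by rw [hσl])
      · exact entry _ _ _ _ (by rw [hσr, he1]; push_cast; ring) (by rw [hσr, he1]; push_cast; ring)
    calc tau f (s+1) (t+1) (m+1)
        = det ((Matrix.of fun i j : Fin (m+1) => f (s+1 + (i:ℕ), t+1 + (j:ℕ))).submatrix σ σ) :=
          (det_submatrix_equiv_self σ _).symm
      _ = A.det * S 1 1 := by rw [hsub, schur_one, hS]
  -- (0,0) minor
  have hu : tau f s t (m+1) = A.det * S 0 0 := by
    have hsub : (Matrix.of fun i j : Fin (m+1) => f (s + (i:ℕ), t + (j:ℕ))).submatrix σ' σ'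
        = fromBlocks A (B.submatrix id fun _ : Fin 1 => 0)
            (C.submatrix (fun _ : Fin 1 => 0) id)
            (D.submatrix (fun _ : Fin 1 => 0) fun _ => 0) := by
      ext x y
      rcases x with i | r <;> rcases y with j | c <;>
        simp only [Matrix.submatrix_apply, Matrix.of_apply, Matrix.fromBlocks_apply₁₁,
          Matrix.fromBlocks_apply₁₂, Matrix.fromBlocks_apply₂₁, Matrix.fromBlocks_apply₂₂,
          hAdef, hB, hC, hD, id_eq]
      · exact entry _ _ _ _ (by rw [hσ'l]; push_cast; ring) (by rw [hσ'l]; push_cast; ring)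
      · exact entry _ _ _ _ (by rw [hσ'l]; push_cast; ring) (by rw [hσ'r, he0]; push_cast; ring)
      · exact entry _ _ _ _ (by rw [hσ'r, he0]; push_cast; ring) (by rw [hσ'l]; push_cast; ring)
      · exact entry _ _ _ _ (by rw [hσ'r, he0]; push_cast; ring) (by rw [hσ'r, he0]; push_cast; ring)
    calc tau f s t (m+1)
        = det ((Matrix.of fun i j : Fin (m+1) => f (s + (i:ℕ), t + (j:ℕ))).submatrix σ' σ') :=
          (det_submatrix_equiv_self σ' _).symm
      _ = A.det * S 0 0 := by rw [hsub, schur_one, hS]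
  -- (1,0) minor
  have hw : A.det * S 1 0 = (-1:F)^m * tau f (s+1) t (m+1) := by
    have hsub : (Matrix.of fun i j : Fin (m+1) => f (s+1 + (i:ℕ), t + (j:ℕ))).submatrix σ σ'
        = fromBlocks A (B.submatrix id fun _ : Fin 1 => 0)
            (C.submatrix (fun _ : Fin 1 => 1) id)
            (D.submatrix (fun _ : Fin 1 => 1) fun _ => 0) := by
      ext x y
      rcases x with i | r <;> rcases y with j | c <;>
        simp only [Matrix.submatrix_apply, Matrix.of_apply, Matrix.fromBlocks_apply₁₁,
          Matrix.fromBlocks_apply₁₂, Matrix.fromBlocks_apply₂₁, Matrix.fromBlocks_apply₂₂,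
          hAdef, hB, hC, hD, id_eq]
      · exact entry _ _ _ _ (by rw [hσl]) (by rw [hσ'l]; push_cast; ring)
      · exact entry _ _ _ _ (by rw [hσl]) (by rw [hσ'r, he0]; push_cast; ring)
      · exact entry _ _ _ _ (by rw [hσr, he1]; push_cast; ring) (by rw [hσ'l]; push_cast; ring)
      · exact entry _ _ _ _ (by rw [hσr, he1]; push_cast; ring) (by rw [hσ'r, he0]; push_cast; ring)
    have h2 : (Matrix.of fun i j : Fin (m+1) => f (s+1 + (i:ℕ), t + (j:ℕ))).submatrix σ σ'
        = ((Matrix.of fun i j : Fin (m+1) => f (s+1 + (i:ℕ), t + (j:ℕ))).submatrix id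
            (finRotate (m+1))).submatrix σ σ := by
      ext x y
      simp only [Matrix.submatrix_apply, id_eq, hrot y]
    have h3 : det ((Matrix.of fun i j : Fin (m+1) => f (s+1 + (i:ℕ), t + (j:ℕ))).submatrix σ σ')
        = (-1:F)^m * tau f (s+1) t (m+1) := by
      rw [h2, det_submatrix_equiv_self, det_permute', sign_finRotate]
      show ((((-1:ℤˣ)^m : ℤˣ) : ℤ) : F) * _ = _
      push_cast
      rfl
    rw [← h3, hsub, schur_one, hS]
  -- (0,1) minor
  have hx : A.det * S 0 1 = (-1:F)^m * tau f s (t+1) (m+1) := by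
    have hsub : (Matrix.of fun i j : Fin (m+1) => f (s + (i:ℕ), t+1 + (j:ℕ))).submatrix σ' σ
        = fromBlocks A (B.submatrix id fun _ : Fin 1 => 1)
            (C.submatrix (fun _ : Fin 1 => 0) id)
            (D.submatrix (fun _ : Fin 1 => 0) fun _ => 1) := by
      ext x y
      rcases x with i | r <;> rcases y with j | c <;>
        simp only [Matrix.submatrix_apply, Matrix.of_apply, Matrix.fromBlocks_apply₁₁,
          Matrix.fromBlocks_apply₁₂, Matrix.fromBlocks_apply₂₁, Matrix.fromBlocks_apply₂₂,
          hAdef, hB, hC, hD, id_eq]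
      · exact entry _ _ _ _ (by rw [hσ'l]; push_cast; ring) (by rw [hσl])
      · exact entry _ _ _ _ (by rw [hσ'l]; push_cast; ring) (by rw [hσr, he1]; push_cast; ring)
      · exact entry _ _ _ _ (by rw [hσ'r, he0]; push_cast; ring) (by rw [hσl])
      · exact entry _ _ _ _ (by rw [hσ'r, he0]; push_cast; ring) (by rw [hσr, he1]; push_cast; ring)
    have h2 : (Matrix.of fun i j : Fin (m+1) => f (s + (i:ℕ), t+1 + (j:ℕ))).submatrix σ' σ
        = ((Matrix.of fun i j : Fin (m+1) => f (s + (i:ℕ), t+1 + (j:ℕ))).submatrix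
            (finRotate (m+1)) id).submatrix σ σ := by
      ext x y
      simp only [Matrix.submatrix_apply, id_eq, hrot x]
    have h3 : det ((Matrix.of fun i j : Fin (m+1) => f (s + (i:ℕ), t+1 + (j:ℕ))).submatrix σ' σ)
        = (-1:F)^m * tau f s (t+1) (m+1) := by
      rw [h2, det_submatrix_equiv_self, det_permute, sign_finRotate]
      show ((((-1:ℤˣ)^m : ℤˣ) : ℤ) : F) * _ = _
      push_cast
      rfl
    rw [← h3, hsub, schur_one, hS]
  have hsq : (-1:F)^m * (-1:F)^m = 1 := by rw [← mul_pow]; norm_num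
  have hdet2 : S.det = S 0 0 * S 1 1 - S 0 1 * S 1 0 := det_fin_two S
  rw [hfull, hv, hu, hAtau]
  linear_combination (A.det * A.det) * hdet2 - (A.det * S 0 1) * hw
    - ((-1:F)^m * tau f (s+1) t (m+1)) * hx
    - (tau f (s+1) t (m+1) * tau f s (t+1) (m+1)) * hsq

lemma tau_zero (f : ℤ × ℤ → F) (s t : ℤ) : tau f s t 0 = 1 := by
  simp [tau]

end AuxToda

/-- If all determinants `τ^{(s,t)}_n` of `f` are nonzero and `(a, b)` is
defined from them by the dependent variable transformation (with `b^{(s,t)}_0 = 0`), then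
`(a, b)` is a solution to the discrete 2D Toda molecule. -/
theorem todaSolution_of_givesSol {F : Type*} [Field F] (f : ℤ × ℤ → F)
    (a b : ℤ → ℤ → ℕ → F) (hgives : GivesSol f a b) (hb0 : ∀ s t : ℤ, b s t 0 = 0) :
    IsTodaSolution a b := by
  obtain ⟨htau, ha, hb⟩ := hgives
  refine ⟨?_, ?_, hb0⟩
  · intro s t n
    rcases n with _ | k
    · rw [ha s (t+1) 0, hb0 (s+1) t, ha s t 0, hb s t 0]
      have J := jacobi f s t 0 (htau (s+1) (t+1) 0)
      simp only [tau_zero] at J ⊢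
      have n1 := htau s (t+1) 1
      have n2 := htau (s+1) (t+1) 1
      have n3 := htau (s+1) t 1
      have n4 := htau s t 1
      field_simp
      linear_combination (-1 : F) * J
    · rw [ha s (t+1) (k+1), hb (s+1) t k, ha s t (k+1), hb s t (k+1)]
      have J1 := jacobi f s t k (htau (s+1) (t+1) k)
      have J2 := jacobi f s t (k+1) (htau (s+1) (t+1) (k+1))
      have n1 := htau s (t+1) (k+1)
      have n2 := htau s (t+1) (k+2)
      have n3 := htau (s+1) (t+1) (k+1)
      have n4 := htau (s+1) (t+1) (k+2)
      have n5 := htau (s+1) (t+1) k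
      have n6 := htau (s+1) t (k+1)
      have n7 := htau (s+1) t (k+2)
      have n8 := htau s t (k+1)
      have n9 := htau s t (k+2)
      have n10 := htau s t (k+3)
      field_simp
      linear_combination
        (tau f s (t+1) (k+2) * tau f (s+1) t (k+2)) * J1
        - (tau f s (t+1) (k+1) * tau f (s+1) t (k+1)) * J2
  · intro s t n
    rw [ha s (t+1) n, hb (s+1) t n, ha s t (n+1), hb s t n]
    have n1 := htau s (t+1) n
    have n2 := htau s (t+1) (n+1)
    have n3 := htau (s+1) (t+1) n
    have n4 := htau (s+1) (t+1) (n+1)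
    have n5 := htau (s+1) t (n+1)
    have n6 := htau (s+1) t (n+2)
    have n7 := htau s t n
    have n8 := htau s t (n+1)
    have n9 := htau s t (n+2)
    have n10 := htau (s+1) (t+1) (n+2)
    field_simp
end

section
/- Let F be a field and let (a,b) be a non-vanishing solution to the discrete 2D Toda molecule over F. Then there exists a function f : ℤ × ℤ → F such that τ^{(s,t)}_n = det_{0 ≤ i,j < n}(f_{s+i,t+j}) is nonzero for all (s,t) ∈ ℤ² and n ≥ 0, and f gives the solution (a,b) through the dependent variable transformation: a^{(s,t)}_n = (τ^{(s+1,t)}_{n+1} τ^{(s,t)}_n)/(τ^{(s+1,t)}_n τ^{(s,t)}_{n+1}) for all n ≥ 0 and b^{(s,t)}_n = (τ^{(s,t+1)}_{n−1} τ^{(s,t)}_{n+1})/(τ^{(s,t+1)}_n τ^{(s,t)}_n) for all n ≥ 1. -/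
/-!
Integrate the solution to a nowhere-vanishing `R(s,t,n)` (`todaRatio`, the future `τ_{n+1}/τ_n`)
with `R(s+1,t,n) = a(s,t,n) R(s,t,n)` and `R(s,t,n+1) = R(s,t+1,n) b(s,t,n+1)`: the second Toda
equation is exactly the compatibility of these two recursions. Then `g(s,t,n) := ∏_{k<n} R(s,t,k)`
(`todaTau`) gives `a` and `b` through the transformation by construction, and the first Toda
equation makes `g` satisfy the bilinear equation
`g^{(s,t)}_{n+2} g^{(s+1,t+1)}_n =
  g^{(s,t)}_{n+1} g^{(s+1,t+1)}_{n+1} - g^{(s,t+1)}_{n+1} g^{(s+1,t)}_{n+1}`.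
By the Desnanot–Jacobi identity the determinants `τ` of `f(s,t) := R(s,t,0)` satisfy the same
recursion in `n`, with the same initial values `τ_0 = 1` and `τ_1 = f`, so `τ = g`; that `g` never
vanishes is what allows dividing by the inner minor.
-/

open Matrix Finset

section DesnanotJacobi

variable {R : Type*} [CommRing R] {ι κ κ' : Type*} [Fintype ι] [DecidableEq ι]

def withPoint (k : κ) : ι ⊕ Unit → ι ⊕ κ :=
  Sum.map id fun _ => k

theorem det_fromBlocks_submatrix_withPoint (A : Matrix ι ι R) (B : Matrix ι κ' R)
    (C : Matrix κ ι R) (D : Matrix κ κ' R) [Invertible A] (k : κ) (l : κ') :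
    ((fromBlocks A B C D).submatrix (withPoint k) (withPoint l)).det =
      A.det * (D - C * ⅟A * B) k l := by
  have hblocks : (fromBlocks A B C D).submatrix (withPoint k) (withPoint l) =
      fromBlocks A (B.submatrix id fun _ => l) (C.submatrix (fun _ => k) id)
        (of fun _ _ => D k l) := by
    ext (_ | _) (_ | _) <;> rfl
  rw [hblocks, det_fromBlocks₁₁, det_unique (_ - _)]
  simp [mul_apply]

theorem det_fromBlocks_mul_det (A : Matrix ι ι R) (B : Matrix ι (Fin 2) R)
    (C : Matrix (Fin 2) ι R) (D : Matrix (Fin 2) (Fin 2) R) [Invertible A] :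
    let M := fromBlocks A B C D
    M.det * A.det =
      (M.submatrix (withPoint 0) (withPoint 0)).det *
          (M.submatrix (withPoint 1) (withPoint 1)).det -
        (M.submatrix (withPoint 0) (withPoint 1)).det *
          (M.submatrix (withPoint 1) (withPoint 0)).det := by
  simp only [det_fromBlocks_submatrix_withPoint, det_fromBlocks₁₁, det_fin_two]
  ring

theorem det_submatrix_equiv_mul_det_submatrix_equiv {ι' : Type*} [Fintype ι'] [DecidableEq ι']
    (e₁ e₂ : ι' ≃ ι) (X Y : Matrix ι ι R) :
    (X.submatrix e₁ e₂).det * (Y.submatrix e₂ e₁).det = X.det * Y.det := by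
  have hX := det_reindex e₁.symm e₂.symm X
  have hY := det_reindex e₂.symm e₁.symm Y
  simp only [reindex_apply, Equiv.symm_symm] at hX hY
  have hσ : e₂.symm.trans e₁ = (e₁.symm.trans e₂).symm := rfl
  rw [hX, hY, hσ, Equiv.Perm.sign_symm]
  have hsq : ((Equiv.Perm.sign (e₁.symm.trans e₂) : ℤ) : R) *
      ((Equiv.Perm.sign (e₁.symm.trans e₂) : ℤ) : R) = 1 := by
    rw [← Int.cast_mul, ← Units.val_mul, Int.units_mul_self, Units.val_one, Int.cast_one]
  linear_combination (X.det * Y.det) * hsq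

def finSumUnitEquiv {n : ℕ} (p : Fin (n + 1)) : Fin n ⊕ Unit ≃ Fin (n + 1) :=
  ((finSuccEquiv' p).trans (Equiv.optionEquivSumPUnit.{0} (Fin n))).symm

@[simp] lemma finSumUnitEquiv_inl {n : ℕ} (p : Fin (n + 1)) (i : Fin n) :
    finSumUnitEquiv p (.inl i) = p.succAbove i := by
  simp [finSumUnitEquiv]

@[simp] lemma finSumUnitEquiv_inr {n : ℕ} (p : Fin (n + 1)) (u : Unit) :
    finSumUnitEquiv p (.inr u) = p := by
  simp [finSumUnitEquiv]

def finSumEndpointsEquiv (n : ℕ) : Fin n ⊕ Fin 2 ≃ Fin (n + 2) where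
  toFun := Sum.elim (fun i => i.castSucc.succ) ![0, Fin.last (n + 1)]
  invFun := Fin.cases (.inr 0) (Fin.lastCases (.inr 1) .inl)
  left_inv := by
    rintro (i | k)
    · simp
    · fin_cases k <;> simp [← Fin.succ_last]
  right_inv := by
    intro j
    induction j using Fin.cases with
    | zero => simp
    | succ j =>
      induction j using Fin.lastCases with
      | last => simp only [Fin.cases_succ, Fin.lastCases_last]; simp
      | cast j => simp

theorem det_mul_det_submatrix_succ_castSucc {n : ℕ} (M : Matrix (Fin (n + 2)) (Fin (n + 2)) R)
    (h : IsUnit (M.submatrix (Fin.succ ∘ Fin.castSucc) (Fin.succ ∘ Fin.castSucc)).det) :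
    M.det * (M.submatrix (Fin.succ ∘ Fin.castSucc) (Fin.succ ∘ Fin.castSucc)).det =
      (M.submatrix Fin.castSucc Fin.castSucc).det * (M.submatrix Fin.succ Fin.succ).det -
      (M.submatrix Fin.castSucc Fin.succ).det * (M.submatrix Fin.succ Fin.castSucc).det := by
  set e := finSumEndpointsEquiv n
  set N := M.submatrix e e
  have hfirst : e ∘ withPoint 0 = Fin.castSucc ∘ finSumUnitEquiv 0 := by
    funext x; rcases x with i | u <;> simp [e, finSumEndpointsEquiv, withPoint]
  have hlast : e ∘ withPoint 1 = Fin.succ ∘ finSumUnitEquiv (Fin.last n) := by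
    funext x; rcases x with i | u <;> simp [e, finSumEndpointsEquiv, withPoint]
  let _ : Invertible N.toBlocks₁₁ := invertibleOfIsUnitDet _ h
  have key := det_fromBlocks_mul_det N.toBlocks₁₁ N.toBlocks₁₂ N.toBlocks₂₁ N.toBlocks₂₂
  simp only [fromBlocks_toBlocks, N, submatrix_submatrix, hfirst, hlast,
    det_submatrix_equiv_self] at key
  rw [← det_submatrix_equiv_self (finSumUnitEquiv 0) (M.submatrix Fin.castSucc Fin.castSucc),
    ← det_submatrix_equiv_self (finSumUnitEquiv (Fin.last n)) (M.submatrix Fin.succ Fin.succ),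
    ← det_submatrix_equiv_mul_det_submatrix_equiv (finSumUnitEquiv 0)
      (finSumUnitEquiv (Fin.last n))]
  exact key

end DesnanotJacobi

theorem submatrix_of_shift {α : Type*} (f : ℤ × ℤ → α) (s t : ℤ) {m k : ℕ}
    (ρ γ : Fin m → Fin k) (δ ε : ℤ) (hρ : ∀ i, ((ρ i : ℕ) : ℤ) = δ + i)
    (hγ : ∀ j, ((γ j : ℕ) : ℤ) = ε + j) :
    (of fun i j : Fin k => f (s + (i : ℕ), t + (j : ℕ))).submatrix ρ γ =
      of fun i j : Fin m => f (s + δ + (i : ℕ), t + ε + (j : ℕ)) := by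
  ext i j
  simp [hρ, hγ, add_assoc]

theorem tau_desnanotJacobi {F : Type*} [Field F] (f : ℤ × ℤ → F) (s t : ℤ) (n : ℕ)
    (h : tau f (s + 1) (t + 1) n ≠ 0) :
    tau f s t (n + 2) * tau f (s + 1) (t + 1) n =
      tau f s t (n + 1) * tau f (s + 1) (t + 1) (n + 1) -
        tau f s (t + 1) (n + 1) * tau f (s + 1) t (n + 1) := by
  have hcast : ∀ {m} (i : Fin m), (((Fin.castSucc i : Fin (m + 1)) : ℕ) : ℤ) = 0 + i := by simp
  have hsucc : ∀ {m} (i : Fin m), (((Fin.succ i : Fin (m + 1)) : ℕ) : ℤ) = 1 + i := by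
    simp [add_comm]
  have hin : ∀ i : Fin n, (((Fin.succ ∘ Fin.castSucc) i : ℕ) : ℤ) = 1 + i := fun i => hsucc _
  have key := det_mul_det_submatrix_succ_castSucc
    (of fun i j : Fin (n + 2) => f (s + (i : ℕ), t + (j : ℕ)))
  simp only [submatrix_of_shift f s t _ _ _ _ hcast hsucc,
    submatrix_of_shift f s t _ _ _ _ hsucc hcast, submatrix_of_shift f s t _ _ _ _ hcast hcast,
    submatrix_of_shift f s t _ _ _ _ hsucc hsucc, submatrix_of_shift f s t _ _ _ _ hin hin,
    add_zero] at key
  exact key h.isUnit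

section IntProd

variable {G₀ : Type*} [CommGroupWithZero G₀]

noncomputable def intProd (x : ℤ → G₀) (s : ℤ) : G₀ :=
  (∏ k ∈ Ico 0 s, x k) / ∏ k ∈ Ico s 0, x k

theorem intProd_add_one (x : ℤ → G₀) (s : ℤ) (hx : x s ≠ 0) :
    intProd x (s + 1) = x s * intProd x s := by
  rcases le_or_gt 0 s with hs | hs
  · rw [intProd, intProd, ← insert_Ico_right_eq_Ico_add_one hs, prod_insert (by simp),
      Ico_eq_empty_of_le (by omega : 0 ≤ s + 1), Ico_eq_empty_of_le hs, mul_div_assoc]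
  · rw [intProd, intProd, ← insert_Ico_add_one_left_eq_Ico hs, prod_insert (by simp),
      Ico_eq_empty_of_le (by omega : s + 1 ≤ 0), Ico_eq_empty_of_le hs.le]
    field_simp

theorem intProd_ne_zero {x : ℤ → G₀} (hx : ∀ k, x k ≠ 0) (s : ℤ) : intProd x s ≠ 0 :=
  div_ne_zero (prod_ne_zero_iff.2 fun k _ => hx k) (prod_ne_zero_iff.2 fun k _ => hx k)

end IntProd

section Toda

variable {F : Type*} [Field F] (a b : ℤ → ℤ → ℕ → F)

noncomputable def todaRatio : ℤ → ℤ → ℕ → F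
  | s, t, 0 => intProd (fun k => a k t 0) s
  | s, t, n + 1 => todaRatio s (t + 1) n * b s t (n + 1)

noncomputable def todaTau (s t : ℤ) (n : ℕ) : F :=
  ∏ k ∈ range n, todaRatio a b s t k

variable {a b}

theorem todaRatio_ne_zero (hnv : NonVanishing a b) (s t : ℤ) (n : ℕ) : todaRatio a b s t n ≠ 0 := by
  induction n generalizing t with
  | zero => exact intProd_ne_zero (fun k => hnv.1 k t 0) s
  | succ n ih => exact mul_ne_zero (ih (t + 1)) (hnv.2 s t n)

theorem todaRatio_add_one_left (hT : IsTodaSolution a b) (ha : ∀ s t, a s t 0 ≠ 0) (s t : ℤ)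
    (n : ℕ) : todaRatio a b (s + 1) t n = a s t n * todaRatio a b s t n := by
  induction n generalizing t with
  | zero => exact intProd_add_one _ s (ha s t)
  | succ n ih =>
    simp only [todaRatio, ih]
    linear_combination todaRatio a b s (t + 1) n * hT.2.1 s t n

theorem todaTau_succ (s t : ℤ) (n : ℕ) :
    todaTau a b s t (n + 1) = todaTau a b s t n * todaRatio a b s t n :=
  prod_range_succ _ n

theorem todaTau_ne_zero (hnv : NonVanishing a b) (s t : ℤ) (n : ℕ) : todaTau a b s t n ≠ 0 :=
  prod_ne_zero_iff.2 fun k _ => todaRatio_ne_zero hnv s t k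

theorem todaTau_add_one_left (hT : IsTodaSolution a b) (ha : ∀ s t, a s t 0 ≠ 0) (s t : ℤ)
    (n : ℕ) : todaTau a b (s + 1) t n = (∏ j ∈ range n, a s t j) * todaTau a b s t n := by
  simp only [todaTau, todaRatio_add_one_left hT ha, prod_mul_distrib]

theorem todaTau_succ_eq_todaTau_add_one_right (s t : ℤ) (n : ℕ) :
    todaTau a b s t (n + 1) =
      todaRatio a b s t 0 * (∏ j ∈ range n, b s t (j + 1)) * todaTau a b s (t + 1) n := by
  simp only [todaTau, prod_range_succ' _ n, todaRatio, prod_mul_distrib]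
  ring

theorem IsTodaSolution.prod_mul_b_eq_sub (hT : IsTodaSolution a b) (s t : ℤ) (n : ℕ) :
    (∏ j ∈ range n, a s (t + 1) j) * b s t (n + 1) =
      ∏ j ∈ range (n + 1), a s (t + 1) j - ∏ j ∈ range (n + 1), a s t j := by
  obtain ⟨hsum, hmul, hb0⟩ := hT
  induction n with
  | zero =>
    simp only [zero_add, prod_range_zero, prod_range_one, one_mul]
    linear_combination hb0 (s + 1) t - hsum s t 0
  | succ n ih =>
    rw [prod_range_succ _ (n + 1), prod_range_succ _ (n + 1)]
    rw [prod_range_succ] at ih ⊢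
    linear_combination (∏ j ∈ range n, a s (t + 1) j) * hmul s t n + a s t (n + 1) * ih -
      (∏ j ∈ range n, a s (t + 1) j) * a s (t + 1) n * hsum s t (n + 1)

theorem todaTau_hirota (hT : IsTodaSolution a b) (ha : ∀ s t, a s t 0 ≠ 0) (s t : ℤ) (n : ℕ) :
    todaTau a b s t (n + 2) * todaTau a b (s + 1) (t + 1) n =
      todaTau a b s t (n + 1) * todaTau a b (s + 1) (t + 1) (n + 1) -
        todaTau a b s (t + 1) (n + 1) * todaTau a b (s + 1) t (n + 1) := by
  rw [todaTau_add_one_left hT ha s (t + 1), todaTau_add_one_left hT ha s (t + 1),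
    todaTau_add_one_left hT ha s t, todaTau_succ_eq_todaTau_add_one_right s t (n + 1),
    todaTau_succ_eq_todaTau_add_one_right s t n, prod_range_succ _ n]
  linear_combination todaRatio a b s t 0 * (∏ j ∈ range n, b s t (j + 1)) *
    todaTau a b s (t + 1) n * todaTau a b s (t + 1) (n + 1) * hT.prod_mul_b_eq_sub s t n

theorem tau_todaRatio_eq_todaTau (hT : IsTodaSolution a b) (hnv : NonVanishing a b) :
    ∀ (n : ℕ) (s t : ℤ), tau (fun p => todaRatio a b p.1 p.2 0) s t n = todaTau a b s t n
  | 0, s, t => by simp [tau, todaTau]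
  | 1, s, t => by simp [tau, todaTau]
  | n + 2, s, t => by
    have hdj := tau_desnanotJacobi (fun p => todaRatio a b p.1 p.2 0) s t n
      (by rw [tau_todaRatio_eq_todaTau hT hnv n]; exact todaTau_ne_zero hnv _ _ n)
    simp only [tau_todaRatio_eq_todaTau hT hnv (n + 1), tau_todaRatio_eq_todaTau hT hnv n] at hdj
    exact mul_right_cancel₀ (todaTau_ne_zero hnv (s + 1) (t + 1) n)
      (hdj.trans (todaTau_hirota hT (fun s t => hnv.1 s t 0) s t n).symm)

theorem a_eq_todaTau_div (hT : IsTodaSolution a b) (hnv : NonVanishing a b) (s t : ℤ) (n : ℕ) :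
    a s t n = todaTau a b (s + 1) t (n + 1) * todaTau a b s t n /
      (todaTau a b (s + 1) t n * todaTau a b s t (n + 1)) := by
  have := todaTau_ne_zero hnv (s + 1) t n
  have := todaTau_ne_zero hnv s t n
  have := todaRatio_ne_zero hnv s t n
  rw [todaTau_succ, todaTau_succ, todaRatio_add_one_left hT fun s t => hnv.1 s t 0]
  field_simp

theorem b_eq_todaTau_div (hnv : NonVanishing a b) (s t : ℤ) (n : ℕ) :
    b s t (n + 1) = todaTau a b s (t + 1) n * todaTau a b s t (n + 2) /
      (todaTau a b s (t + 1) (n + 1) * todaTau a b s t (n + 1)) := by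
  have := todaTau_ne_zero hnv s (t + 1) n
  have := todaTau_ne_zero hnv s t (n + 1)
  have := todaRatio_ne_zero hnv s (t + 1) n
  rw [todaTau_succ s t (n + 1), todaTau_succ s (t + 1) n, todaRatio]
  field_simp

end Toda

/-- Every non-vanishing solution `(a, b)` to the discrete 2D Toda molecule
arises from some function `f : ℤ² → F` through the dependent variable transformation. -/
theorem exists_givesSol {F : Type*} [Field F] (a b : ℤ → ℤ → ℕ → F)
    (hT : IsTodaSolution a b) (hnv : NonVanishing a b) :
    ∃ f : ℤ × ℤ → F, GivesSol f a b := by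
  have htau := tau_todaRatio_eq_todaTau hT hnv
  refine ⟨fun p => todaRatio a b p.1 p.2 0, ?_⟩
  simp only [GivesSol, htau]
  exact ⟨todaTau_ne_zero hnv, a_eq_todaTau_div hT hnv, b_eq_todaTau_div hnv⟩
end

section
/- Let F be a field, let a ∈ F, and let (p_ℓ)_{ℓ∈ℤ}, (q_ℓ)_{ℓ∈ℤ} be families of nonzero elements of F. Define a^{(s,t)}_n = [p]_{s+1}^{s+n} · (1 − a·[p]_1^s·[q]_1^{t+n}) and b^{(s,t)}_n = a·[p]_1^{s+n−1}·[q]_1^t·(1 − [q]_{t+1}^{t+n}) for (s,t) ∈ ℤ² and n ∈ ℤ_{≥0}. Then (a,b) is a solution to the discrete 2D Toda molecule: b^{(s,t)}_0 = 0 and, for all (s,t) ∈ ℤ² and n ≥ 0, a^{(s,t+1)}_n + b^{(s+1,t)}_n = a^{(s,t)}_n + b^{(s,t)}_{n+1} and a^{(s,t+1)}_n · b^{(s+1,t)}_{n+1} = a^{(s,t)}_{n+1} · b^{(s,t)}_{n+1}. -/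
/-- `gprod z m n = [z]_m^n`: `∏_{l=m}^{n} z_l` if `m ≤ n`, `1` if `m = n + 1`, and
`(∏_{l=n+1}^{m-1} z_l)⁻¹` if `m ≥ n + 2`. -/
noncomputable def gprod {F : Type*} [Field F] (z : ℤ → F) (m n : ℤ) : F :=
  if m ≤ n + 1 then ∏ l ∈ Finset.Icc m n, z l
  else (∏ l ∈ Finset.Icc (n + 1) (m - 1), z l)⁻¹

open Finset

section GeneralizedProduct

variable {F : Type*} [Field F]

lemma gprod_ne_zero {z : ℤ → F} (hz : ∀ l, z l ≠ 0) (m n : ℤ) : gprod z m n ≠ 0 := by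
  unfold gprod
  split
  · exact prod_ne_zero_iff.2 fun l _ => hz l
  · exact inv_ne_zero (prod_ne_zero_iff.2 fun l _ => hz l)

lemma gprod_sub_one (z : ℤ → F) (m : ℤ) : gprod z m (m - 1) = 1 := by
  rw [gprod, if_pos (by omega), Icc_eq_empty (by omega), prod_empty]

lemma gprod_add_one {z : ℤ → F} (hz : ∀ l, z l ≠ 0) (m n : ℤ) :
    gprod z m (n + 1) = gprod z m n * z (n + 1) := by
  unfold gprod
  rcases lt_trichotomy m (n + 2) with h | rfl | h
  · rw [if_pos (by omega), if_pos (by omega), ← insert_Icc_right_eq_Icc_add_one (by omega),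
      prod_insert (by simp), mul_comm]
  · rw [if_pos (by omega), if_neg (by omega), show n + 2 - 1 = n + 1 by ring, Icc_self,
      prod_singleton, Icc_eq_empty (by omega), prod_empty, inv_mul_cancel₀ (hz _)]
  · rw [if_neg (by omega), if_neg (by omega),
      ← insert_Icc_add_one_left_eq_Icc (a := n + 1) (by omega), prod_insert (by simp), mul_inv,
      mul_comm (z _)⁻¹, mul_assoc, inv_mul_cancel₀ (hz _), mul_one]

lemma gprod_eq_div {z : ℤ → F} (hz : ∀ l, z l ≠ 0) (k m n : ℤ) :
    gprod z m n = gprod z k n / gprod z k (m - 1) := by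
  induction n using Int.inductionOn' (b := m - 1) with
  | zero => rw [gprod_sub_one, div_self (gprod_ne_zero hz k _)]
  | succ n _ ih => rw [gprod_add_one hz, gprod_add_one hz, ih, div_mul_eq_mul_div]
  | pred n _ ih =>
    have hm := gprod_add_one hz m (n - 1)
    have hk := gprod_add_one hz k (n - 1)
    rw [sub_add_cancel] at hm hk
    rw [hm, hk, mul_div_right_comm] at ih
    exact mul_right_cancel₀ (hz n) ih

end GeneralizedProduct

theorem isTodaSolution_of_potentials {F : Type*} [Field F] (A : F) (P Q : ℤ → F)
    (hP : ∀ s, P s ≠ 0) :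
    IsTodaSolution (fun s t n => P (s + n) / P s * (1 - A * P s * Q (t + n)))
      (fun s t n => A * P (s + n - 1) * (Q t - Q (t + n))) := by
  refine ⟨fun s t n => ?_, fun s t n => ?_, fun s t => by simp⟩ <;>
    simp only [Nat.cast_succ, show t + 1 + (n : ℤ) = t + (n + 1) by ring]
  · rw [show s + 1 + (n : ℤ) - 1 = s + n by ring, show s + ((n : ℤ) + 1) - 1 = s + n by ring]
    field_simp [hP s]
    ring
  · rw [show s + 1 + ((n : ℤ) + 1) - 1 = s + (n + 1) by ring,
      show s + ((n : ℤ) + 1) - 1 = s + n by ring]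
    ring

/-- For any `a ∈ F` and nonzero families `(p_l)`, `(q_l)`,
`a^{(s,t)}_n = [p]_{s+1}^{s+n} (1 - a [p]_1^s [q]_1^{t+n})` and
`b^{(s,t)}_n = a [p]_1^{s+n-1} [q]_1^t (1 - [q]_{t+1}^{t+n})` solve the discrete 2D Toda
molecule. -/
theorem toda_solution_pq {F : Type*} [Field F] (A : F) (p q : ℤ → F)
    (hp : ∀ l : ℤ, p l ≠ 0) (hq : ∀ l : ℤ, q l ≠ 0) :
    IsTodaSolution
      (fun s t n => gprod p (s + 1) (s + n) * (1 - A * gprod p 1 s * gprod q 1 (t + n)))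
      (fun s t n =>
        A * gprod p 1 (s + n - 1) * gprod q 1 t * (1 - gprod q (t + 1) (t + n))) := by
  convert isTodaSolution_of_potentials A (gprod p 1) (gprod q 1) (gprod_ne_zero hp 1) using 1
    <;> funext s t n
  · rw [gprod_eq_div hp 1 (s + 1), add_sub_cancel_right]
  · rw [gprod_eq_div hq 1 (t + 1), add_sub_cancel_right, mul_assoc, mul_one_sub,
      mul_div_cancel₀ _ (gprod_ne_zero hq 1 t)]
end

section
/- Let λ be a partition with r rows and c columns (conventions λ_i = c for i ≤ 0, λ_i = 0 for i > r, λ'_j = r for j ≤ 0, λ'_j = 0 for j > c) and let n ≥ 0. In the field of rational functions Frac(ℚ[x_ℓ : ℓ ∈ ℤ]), ∏_{i=1}^{r} ∏_{k=1}^{n} (1 − [x]_{−k+1−λ'_{−k+1}}^{λ_i−i}) / (1 − [x]_{−k+1+λ_i−λ'_{−k+1+λ_i}}^{λ_i−i}) = ∏_{(i,j) ∈ λ} (1 − [x]_{−n+j−λ'_{−n+j}}^{λ_i−i}) / (1 − [x]_{j−λ'_j}^{λ_i−i}). -/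
/-- `lam : ℤ → ℤ` encodes a partition `λ` with `r` rows and `c = λ_1` columns,
with the conventions `λ_i = c` for `i ≤ 0` and `λ_i = 0` for `i > r`. -/
structure PartitionShape (r c : ℤ) (lam : ℤ → ℤ) : Prop where
  one_le_r : 1 ≤ r
  antitone : ∀ i j : ℤ, i ≤ j → lam j ≤ lam i
  low : ∀ i : ℤ, i ≤ 0 → lam i = c
  first : lam 1 = c
  pos : ∀ i : ℤ, 1 ≤ i → i ≤ r → 1 ≤ lam i
  high : ∀ i : ℤ, r < i → lam i = 0

/-- The conjugate partition `λ'_j = #{1 ≤ i ≤ r : λ_i ≥ j}`; this automatically satisfies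
the conventions `λ'_j = r` for `j ≤ 0` and `λ'_j = 0` for `j > c`. -/
noncomputable def conjPart (r : ℤ) (lam : ℤ → ℤ) (j : ℤ) : ℤ :=
  (((Finset.Icc 1 r).filter fun i => j ≤ lam i).card : ℤ)

/-- The cells `(i,j)` of the Young diagram of `λ`: `1 ≤ i ≤ r`, `1 ≤ j ≤ λ_i`. -/
noncomputable def cells (r : ℤ) (lam : ℤ → ℤ) : Finset (ℤ × ℤ) :=
  (Finset.Icc 1 r ×ˢ Finset.Icc 1 (lam 1)).filter fun p => p.2 ≤ lam p.1

/-- A reverse plane partition of shape `λ` with parts at most `n`, encoded as a function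
`ℤ × ℤ → ℕ` vanishing outside the cells of `λ` and weakly increasing along rows and columns. -/
def IsRPP (r : ℤ) (lam : ℤ → ℤ) (n : ℕ) (π : ℤ × ℤ → ℕ) : Prop :=
  (∀ p, p ∉ cells r lam → π p = 0) ∧
  (∀ p ∈ cells r lam, π p ≤ n) ∧
  (∀ i j : ℤ, (i, j) ∈ cells r lam → (i, j + 1) ∈ cells r lam → π (i, j) ≤ π (i, j + 1)) ∧
  (∀ i j : ℤ, (i, j) ∈ cells r lam → (i + 1, j) ∈ cells r lam → π (i, j) ≤ π (i + 1, j))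

/-- The `l`-trace of `π`: the sum of the parts on the diagonal `j - i = l`. -/
noncomputable def rppTrace (r : ℤ) (lam : ℤ → ℤ) (l : ℤ) (π : ℤ × ℤ → ℕ) : ℕ :=
  ∑ p ∈ (cells r lam).filter fun p => p.2 - p.1 = l, π p

/-- The images of the variables `x_l` in the field of rational functions
`Frac(ℚ[x_l : l ∈ ℤ])`. -/
noncomputable def Xv (l : ℤ) : FractionRing (MvPolynomial ℤ ℚ) :=
  algebraMap (MvPolynomial ℤ ℚ) (FractionRing (MvPolynomial ℤ ℚ)) (MvPolynomial.X l)

/-!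
Fix a row `i` and put `f j = 1 - [x]_{j-λ'_j}^{λ_i-i}`. After reindexing, the row factor on the
left is `∏_{(-n,0]} f / ∏_{(λ_i-n,λ_i]} f` and the one on the right is
`∏_{(-n,λ_i-n]} f / ∏_{(0,λ_i]} f`; both numerator-times-opposite-denominator products equal
`∏_{(-n,λ_i]} f`. The denominators do not vanish: for `j ≤ λ_i` we have `λ'_j ≥ i`, so
`[x]_{j-λ'_j}^{λ_i-i}` is a nonempty product of distinct variables, hence not `1`.
-/

open Finset

lemma MvPolynomial.prod_X_ne_one {R σ : Type*} [CommSemiring R] [Nontrivial R] {s : Finset σ}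
    (hs : s.Nonempty) : ∏ l ∈ s, (X l : MvPolynomial σ R) ≠ 1 := by
  intro h
  have h0 := congrArg (MvPolynomial.eval fun _ => (0 : R)) h
  simp only [MvPolynomial.eval_prod, MvPolynomial.eval_X, map_one, prod_const,
    zero_pow (card_ne_zero.mpr hs)] at h0
  exact zero_ne_one h0

lemma gprod_of_le {F : Type*} [Field F] (z : ℤ → F) {m n : ℤ} (h : m ≤ n + 1) :
    gprod z m n = ∏ l ∈ Icc m n, z l :=
  if_pos h

lemma one_sub_gprod_Xv_ne_zero {m n : ℤ} (h : m ≤ n) : 1 - gprod Xv m n ≠ 0 := by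
  have hprod : ∏ l ∈ Icc m n, Xv l = algebraMap _ _ (∏ l ∈ Icc m n, MvPolynomial.X l) :=
    (map_prod _ _ _).symm
  rw [gprod_of_le Xv (by omega), sub_ne_zero, ne_comm, hprod,
    ← map_one (algebraMap (MvPolynomial ℤ ℚ) (FractionRing (MvPolynomial ℤ ℚ))),
    (IsFractionRing.injective (MvPolynomial ℤ ℚ) _).ne_iff]
  exact MvPolynomial.prod_X_ne_one (nonempty_Icc.mpr h)

lemma le_conjPart {r : ℤ} {lam : ℤ → ℤ} (hlam : Antitone lam) {i j : ℤ} (hir : i ≤ r)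
    (hj : j ≤ lam i) : i ≤ conjPart r lam j := by
  have hsub : Icc 1 i ⊆ (Icc 1 r).filter fun i' => j ≤ lam i' := fun a ha => by
    rw [mem_Icc] at ha
    exact mem_filter.mpr ⟨mem_Icc.mpr ⟨ha.1, ha.2.trans hir⟩, hj.trans (hlam ha.2)⟩
  have hcard := card_le_card hsub
  rw [Int.card_Icc] at hcard
  unfold conjPart
  omega

lemma prod_cells {M : Type*} [CommMonoid M] {r : ℤ} {lam : ℤ → ℤ} (hlam : Antitone lam)
    (g : ℤ × ℤ → M) :
    ∏ p ∈ cells r lam, g p = ∏ i ∈ Icc 1 r, ∏ j ∈ Icc 1 (lam i), g (i, j) := by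
  rw [cells, prod_filter, prod_product]
  refine prod_congr rfl fun i hi => ?_
  rw [← prod_filter]
  congr 1
  ext j
  have := hlam (mem_Icc.mp hi).1
  simp only [mem_filter, mem_Icc]
  omega

section Reindex

variable {M : Type*} [CommMonoid M] (f : ℤ → M)

lemma prod_Icc_one_reflect (c n : ℤ) :
    ∏ k ∈ Icc 1 n, f (-k + 1 + c) = ∏ j ∈ Ioc (c - n) c, f j := by
  refine prod_nbij' (fun k => -k + 1 + c) (fun j => -j + 1 + c) ?_ ?_ ?_ ?_ fun _ _ => rfl <;>
    intro k hk <;> simp only [mem_Icc, mem_Ioc] at hk ⊢ <;> omega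

lemma prod_Icc_one_shift (c L : ℤ) :
    ∏ j ∈ Icc 1 L, f (c + j) = ∏ j ∈ Ioc c (c + L), f j := by
  refine prod_nbij' (fun j => c + j) (fun j => j - c) ?_ ?_ ?_ ?_ fun _ _ => rfl <;>
    intro k hk <;> simp only [mem_Icc, mem_Ioc] at hk ⊢ <;> omega

end Reindex

lemma prod_Ioc_mul_prod_Ioc {M : Type*} [CommMonoid M] (f : ℤ → M) {a b c : ℤ} (hab : a ≤ b)
    (hbc : b ≤ c) : (∏ j ∈ Ioc a b, f j) * ∏ j ∈ Ioc b c, f j = ∏ j ∈ Ioc a c, f j := by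
  rw [← prod_union (Ioc_disjoint_Ioc_of_le le_rfl), Ioc_union_Ioc_eq_Ioc hab hbc]

lemma prod_Ioc_window_div {G : Type*} [CommGroupWithZero G] (f : ℤ → G) {s t u : ℤ}
    (hst : s ≤ t) (hu : 0 ≤ u) (hf : ∀ j ≤ t, f j ≠ 0) :
    (∏ j ∈ Ioc (s - u) s, f j) / ∏ j ∈ Ioc (t - u) t, f j =
      (∏ j ∈ Ioc (s - u) (t - u), f j) / ∏ j ∈ Ioc s t, f j := by
  have hne : ∀ a, (∏ j ∈ Ioc a t, f j) ≠ 0 :=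
    fun a => prod_ne_zero_iff.mpr fun j hj => hf j (mem_Ioc.mp hj).2
  rw [div_eq_div_iff (hne _) (hne _), prod_Ioc_mul_prod_Ioc f (by omega) hst,
    prod_Ioc_mul_prod_Ioc f (by omega) (by omega)]

/-- In `Frac(ℚ[x_l : l ∈ ℤ])`,
`∏_{i=1}^{r} ∏_{k=1}^{n} (1 - [x]_{-k+1-λ'_{-k+1}}^{λ_i-i}) /
(1 - [x]_{-k+1+λ_i-λ'_{-k+1+λ_i}}^{λ_i-i}) =
∏_{(i,j) ∈ λ} (1 - [x]_{-n+j-λ'_{-n+j}}^{λ_i-i}) / (1 - [x]_{j-λ'_j}^{λ_i-i})`. -/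
theorem product_identity (r : ℤ) (lam : ℤ → ℤ)
    (hP : PartitionShape r (lam 1) lam) (n : ℕ) :
    (∏ i ∈ Finset.Icc (1 : ℤ) r, ∏ k ∈ Finset.Icc (1 : ℤ) (n : ℤ),
      (1 - gprod Xv (-k + 1 - conjPart r lam (-k + 1)) (lam i - i)) /
        (1 - gprod Xv (-k + 1 + lam i - conjPart r lam (-k + 1 + lam i)) (lam i - i))) =
      ∏ p ∈ cells r lam,
        (1 - gprod Xv (-(n : ℤ) + p.2 - conjPart r lam (-(n : ℤ) + p.2)) (lam p.1 - p.1)) /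
          (1 - gprod Xv (p.2 - conjPart r lam p.2) (lam p.1 - p.1)) := by
  have hlam : Antitone lam := fun a b h => hP.antitone a b h
  rw [prod_cells hlam]
  refine prod_congr rfl fun i hi => ?_
  obtain ⟨hi1, hir⟩ := mem_Icc.mp hi
  set f : ℤ → FractionRing (MvPolynomial ℤ ℚ) :=
    fun j => 1 - gprod Xv (j - conjPart r lam j) (lam i - i)
  have hf : ∀ j ≤ lam i, f j ≠ 0 := fun j hj =>
    one_sub_gprod_Xv_ne_zero (by linarith [le_conjPart hlam hir hj])
  calc _ = (∏ j ∈ Ioc (0 - (n : ℤ)) 0, f j) / ∏ j ∈ Ioc (lam i - n) (lam i), f j := by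
        rw [prod_div_distrib, ← prod_Icc_one_reflect, ← prod_Icc_one_reflect]
        exact congrArg₂ _ (prod_congr rfl fun k _ => by rw [add_zero]) rfl
    _ = (∏ j ∈ Ioc (0 - (n : ℤ)) (lam i - n), f j) / ∏ j ∈ Ioc 0 (lam i), f j :=
        prod_Ioc_window_div f (by linarith [hP.pos i hi1 hir]) n.cast_nonneg hf
    _ = _ := by
        have hshift := prod_Icc_one_shift f (-n) (lam i)
        rw [neg_add_eq_sub] at hshift
        rw [prod_div_distrib, zero_sub, ← hshift, ← Icc_add_one_left_eq_Ioc, zero_add]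
end
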